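/- arXiv:2401.14788 — 8 statements merged into one kernel-verified Lean document; each statement's English description precedes it below -/
import Mathlib

section
/- Let γ > 0, n > 0, k > 0, 0 < x₀ < k, and let p satisfy 0 < p < 1 + 1/n with p ≠ 1. Set Aₙ = (k/x₀)ⁿ − 1. Then the function x(t) = k / (1 + [γ n (p−1)(t−t₀) + Aₙ^{1−p}]^{1/(1−p)})^{1/n} (all powers being real powers) satisfies x(t₀) = x₀ and, for every t ≥ t₀ such that γ n (p−1)(t−t₀) + Aₙ^{1−p} > 0, solves the ordinary differential equation x'(t) = γ k^{n(p−1)} x(t)^{1+n(1−p)} [1 − (x(t)/k)ⁿ]^{p}. -/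
open Real

/-!
With `w = (k / x) ^ n - 1` the growth equation becomes the separable equation
`w' = -γ n w ^ p`, whose solution with `w(t₀) = Aₙ` is
`w(t) = [γ n (p - 1)(t - t₀) + Aₙ ^ (1 - p)] ^ (1 / (1 - p))`; the growth curve is
`x = k / (1 + w) ^ (1 / n)`.
-/

theorem hasDerivAt_affine_rpow_one_div_one_sub {c p a t₀ t : ℝ} (hp : p ≠ 1)
    (hu : 0 < c * (p - 1) * (t - t₀) + a) :
    HasDerivAt (fun s => (c * (p - 1) * (s - t₀) + a) ^ (1 / (1 - p)))
      (-c * ((c * (p - 1) * (t - t₀) + a) ^ (1 / (1 - p))) ^ p) t := by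
  have hlin : HasDerivAt (fun s => c * (p - 1) * (s - t₀) + a) (c * (p - 1)) t := by
    simpa using (((hasDerivAt_id t).sub_const t₀).const_mul (c * (p - 1))).add_const a
  convert hlin.rpow_const (p := 1 / (1 - p)) (Or.inl hu.ne') using 1
  rw [← rpow_mul hu.le, show 1 / (1 - p) - 1 = 1 / (1 - p) * p by field_simp; ring]
  field_simp
  ring

theorem growth_rhs_eq {γ n k p w : ℝ} (hn : n ≠ 0) (hk : 0 < k) (hw : 0 ≤ w) :
    γ * k ^ (n * (p - 1)) * (k / (1 + w) ^ (1 / n)) ^ (1 + n * (1 - p)) *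
        (1 - (k / (1 + w) ^ (1 / n) / k) ^ n) ^ p =
      γ * k * w ^ p / (1 + w) ^ (1 / n + 1) := by
  have hy : 0 < 1 + w := by linarith
  have hratio : 1 - (k / (1 + w) ^ (1 / n) / k) ^ n = w / (1 + w) := by
    rw [div_div_cancel_left' hk.ne', ← rpow_neg_one, ← rpow_mul hy.le, ← rpow_mul hy.le,
      show 1 / n * -1 * n = -1 by field_simp, rpow_neg_one]
    field_simp
    ring
  have hk1 : k ^ (n * (p - 1)) * k ^ (1 + n * (1 - p)) = k := by
    rw [← rpow_add hk, show n * (p - 1) + (1 + n * (1 - p)) = 1 by ring, rpow_one]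
  have hy1 : (1 + w) ^ (1 / n * (1 + n * (1 - p))) * (1 + w) ^ p = (1 + w) ^ (1 / n + 1) := by
    rw [← rpow_add hy]
    congr 1
    field_simp
    ring
  rw [hratio, div_rpow hk.le (rpow_nonneg hy.le _), ← rpow_mul hy.le, div_rpow hw hy.le]
  calc γ * k ^ (n * (p - 1)) * (k ^ (1 + n * (1 - p)) / (1 + w) ^ (1 / n * (1 + n * (1 - p)))) *
        (w ^ p / (1 + w) ^ p)
      = γ * (k ^ (n * (p - 1)) * k ^ (1 + n * (1 - p))) * w ^ p /
          ((1 + w) ^ (1 / n * (1 + n * (1 - p))) * (1 + w) ^ p) := by ring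
    _ = γ * k * w ^ p / (1 + w) ^ (1 / n + 1) := by rw [hk1, hy1]

theorem hasDerivAt_growth_of_hasDerivAt {γ n k p t : ℝ} {w : ℝ → ℝ} (hn : n ≠ 0)
    (hk : 0 < k) (hw0 : 0 ≤ w t) (hw : HasDerivAt w (-(γ * n) * w t ^ p) t) :
    HasDerivAt (fun s => k / (1 + w s) ^ (1 / n))
      (γ * k ^ (n * (p - 1)) * (k / (1 + w t) ^ (1 / n)) ^ (1 + n * (1 - p)) *
        (1 - (k / (1 + w t) ^ (1 / n) / k) ^ n) ^ p) t := by
  have hy : 0 < 1 + w t := by linarith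
  have hyn : HasDerivAt (fun s => (1 + w s) ^ (1 / n))
      (-(γ * n) * w t ^ p * (1 / n) * (1 + w t) ^ (1 / n - 1)) t :=
    (hw.const_add 1).rpow_const (Or.inl hy.ne')
  refine ((hasDerivAt_const t k).div hyn (rpow_pos_of_pos hy _).ne').congr_deriv ?_
  have hsq : (1 + w t) ^ (1 / n - 1) * (1 + w t) ^ (1 / n + 1) = ((1 + w t) ^ (1 / n)) ^ 2 := by
    rw [← rpow_add hy, ← rpow_natCast, ← rpow_mul hy.le]
    congr 1
    push_cast
    ring
  rw [growth_rhs_eq hn hk hw0, div_eq_div_iff (pow_ne_zero 2 (rpow_pos_of_pos hy _).ne')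
    (rpow_pos_of_pos hy _).ne', ← hsq]
  field_simp
  ring

theorem stmt_0_general (γ n k x₀ t₀ p : ℝ)
    (hn : 0 < n) (hk : 0 < k) (hx₀ : 0 < x₀) (hx₀k : x₀ < k)
    (hpne : p ≠ 1)
    (A : ℝ) (hA : A = (k / x₀) ^ n - 1)
    (x : ℝ → ℝ)
    (hx : ∀ t, x t =
      k / (1 + (γ * n * (p - 1) * (t - t₀) + A ^ (1 - p)) ^ (1 / (1 - p))) ^ (1 / n)) :
    x t₀ = x₀ ∧
      ∀ t, t₀ ≤ t → 0 < γ * n * (p - 1) * (t - t₀) + A ^ (1 - p) →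
        HasDerivAt x
          (γ * k ^ (n * (p - 1)) * x t ^ (1 + n * (1 - p)) * (1 - (x t / k) ^ n) ^ p) t := by
  have hA0 : 0 < A := by
    rw [hA, sub_pos]
    exact one_lt_rpow ((one_lt_div hx₀).2 hx₀k) hn
  rw [show x = _ from funext hx]
  refine ⟨?_, fun t _ hu => ?_⟩
  · simp only [sub_self, mul_zero, zero_add, one_div]
    rw [rpow_rpow_inv hA0.le (sub_ne_zero.2 hpne.symm), hA, add_sub_cancel,
      rpow_rpow_inv (div_pos hk hx₀).le hn.ne', div_div_cancel₀ hk.ne']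
  · exact hasDerivAt_growth_of_hasDerivAt hn.ne' hk (rpow_pos_of_pos hu _).le
      (hasDerivAt_affine_rpow_one_div_one_sub hpne hu)

/-- The general growth curve solves the growth ODE. -/
theorem stmt_0 (γ n k x₀ t₀ p : ℝ)
    (hγ : 0 < γ) (hn : 0 < n) (hk : 0 < k) (hx₀ : 0 < x₀) (hx₀k : x₀ < k)
    (hp0 : 0 < p) (hp1 : p < 1 + 1 / n) (hpne : p ≠ 1)
    (A : ℝ) (hA : A = (k / x₀) ^ n - 1)
    (x : ℝ → ℝ)
    (hx : ∀ t, x t =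
      k / (1 + (γ * n * (p - 1) * (t - t₀) + A ^ (1 - p)) ^ (1 / (1 - p))) ^ (1 / n)) :
    x t₀ = x₀ ∧
      ∀ t, t₀ ≤ t → 0 < γ * n * (p - 1) * (t - t₀) + A ^ (1 - p) →
        HasDerivAt x
          (γ * k ^ (n * (p - 1)) * x t ^ (1 + n * (1 - p)) * (1 - (x t / k) ^ n) ^ p) t :=
  stmt_0_general γ n k x₀ t₀ p hn hk hx₀ hx₀k hpne A hA x hx
end

section
/- Under the hypotheses γ > 0, n > 0, k > 0, 0 < x₀ < k, 0 < p < 1 + 1/n with p ≠ 1, Aₙ = (k/x₀)ⁿ − 1, and Aₙ^{1−p} + n γ (1−p) t₀ > 0, define α = exp(−γn), η = [Aₙ^{1−p} + n γ (1−p) t₀]^{1/(p−1)} and g(t) = (η + [1 + η^{1−p} (ln α)(1−p) t]^{1/(1−p)})^{1/n}. Then for every t with 1 + η^{1−p}(ln α)(1−p)t > 0 and Aₙ^{1−p} + γ n (p−1)(t−t₀) > 0, the reparametrized curve satisfies x₀ · g(t₀)/g(t) = k / (1 + [γ n (p−1)(t−t₀) + Aₙ^{1−p}]^{1/(1−p)})^{1/n}.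 -/
/-!
With `B = Aₙ^{1-p} + nγ(1-p)t₀` we have `η = B^{1/(p-1)}`, so `η^{1-p} = 1/B`
and `B^{1/(1-p)} = 1/η`. Since `ln α = -γn`, the inner bracket of `g(t)` is `C(t)/B`
with `C(t) = Aₙ^{1-p} + γn(p-1)(t-t₀)`, hence `g(t) = η^{1/n} (1 + C(t)^{1/(1-p)})^{1/n}`.
At `t = t₀` this is `η^{1/n} (1 + Aₙ)^{1/n} = η^{1/n} k/x₀`, and the factor `η^{1/n}`
cancels in `g(t₀)/g(t)`.
-/

open Real

namespace GrowthCurve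

lemma rpow_one_div_sub_one_rpow_one_sub {B : ℝ} (hB : 0 < B) {p : ℝ} (hp : p ≠ 1) :
    (B ^ (1 / (p - 1))) ^ (1 - p) = B⁻¹ := by
  have hp' : p - 1 ≠ 0 := sub_ne_zero.mpr hp
  rw [← rpow_mul hB.le, show 1 / (p - 1) * (1 - p) = -1 by field_simp; ring, rpow_neg_one]

lemma rpow_one_div_one_sub {B : ℝ} (hB : 0 ≤ B) (p : ℝ) :
    B ^ (1 / (1 - p)) = (B ^ (1 / (p - 1)))⁻¹ := by
  rw [← rpow_neg hB, ← one_div_neg_eq_neg_one_div, neg_sub]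

lemma add_div_rpow_rpow_eq {B C : ℝ} (hB : 0 < B) (hC : 0 ≤ C) (p n : ℝ) :
    (B ^ (1 / (p - 1)) + (C / B) ^ (1 / (1 - p))) ^ (1 / n) =
      (B ^ (1 / (p - 1))) ^ (1 / n) * (1 + C ^ (1 / (1 - p))) ^ (1 / n) := by
  have hη : 0 ≤ B ^ (1 / (p - 1)) := rpow_nonneg hB.le _
  rw [div_rpow hC hB.le, rpow_one_div_one_sub hB.le, div_inv_eq_mul,
    ← mul_rpow hη (by positivity)]
  ring_nf

lemma one_add_time_change {a γ n p t₀ : ℝ} (hB : 0 < a + n * γ * (1 - p) * t₀)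
    (hp : p ≠ 1) (t : ℝ) :
    1 + ((a + n * γ * (1 - p) * t₀) ^ (1 / (p - 1))) ^ (1 - p) * log (exp (-(γ * n))) *
        (1 - p) * t =
      (a + γ * n * (p - 1) * (t - t₀)) / (a + n * γ * (1 - p) * t₀) := by
  rw [rpow_one_div_sub_one_rpow_one_sub hB hp, log_exp]
  field_simp
  ring

lemma reparam_eq {a γ n p t₀ t : ℝ} (hB : 0 < a + n * γ * (1 - p) * t₀) (hp : p ≠ 1)
    (hC : 0 ≤ a + γ * n * (p - 1) * (t - t₀)) :
    ((a + n * γ * (1 - p) * t₀) ^ (1 / (p - 1)) +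
        (1 + ((a + n * γ * (1 - p) * t₀) ^ (1 / (p - 1))) ^ (1 - p) * log (exp (-(γ * n))) *
          (1 - p) * t) ^ (1 / (1 - p))) ^ (1 / n) =
      ((a + n * γ * (1 - p) * t₀) ^ (1 / (p - 1))) ^ (1 / n) *
        (1 + (a + γ * n * (p - 1) * (t - t₀)) ^ (1 / (1 - p))) ^ (1 / n) := by
  rw [one_add_time_change hB hp, add_div_rpow_rpow_eq hB hC]

end GrowthCurve

open GrowthCurve

theorem stmt_2_general (γ n k x₀ t₀ p : ℝ)
    (hn : 0 < n) (hx₀ : 0 < x₀) (hx₀k : x₀ < k)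
    (hpne : p ≠ 1)
    (A : ℝ) (hA : A = (k / x₀) ^ n - 1)
    (hpos : 0 < A ^ (1 - p) + n * γ * (1 - p) * t₀)
    (α η : ℝ) (hα : α = Real.exp (-(γ * n)))
    (hη : η = (A ^ (1 - p) + n * γ * (1 - p) * t₀) ^ (1 / (p - 1)))
    (g : ℝ → ℝ)
    (hg : ∀ t, g t =
      (η + (1 + η ^ (1 - p) * Real.log α * (1 - p) * t) ^ (1 / (1 - p))) ^ (1 / n)) :
    ∀ t, 0 < 1 + η ^ (1 - p) * Real.log α * (1 - p) * t →
      0 < A ^ (1 - p) + γ * n * (p - 1) * (t - t₀) →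
      x₀ * (g t₀ / g t) =
        k / (1 + (γ * n * (p - 1) * (t - t₀) + A ^ (1 - p)) ^ (1 / (1 - p))) ^ (1 / n) := by
  intro t _ hC
  have hkx₀ : 1 ≤ k / x₀ := (one_le_div hx₀).mpr hx₀k.le
  have hA0 : 0 ≤ A := by rw [hA, sub_nonneg]; exact one_le_rpow hkx₀ hn.le
  have hg_eq (s : ℝ) (hs : 0 ≤ A ^ (1 - p) + γ * n * (p - 1) * (s - t₀)) :
      g s = η ^ (1 / n) *
        (1 + (A ^ (1 - p) + γ * n * (p - 1) * (s - t₀)) ^ (1 / (1 - p))) ^ (1 / n) := by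
    rw [hg, hη, hα]
    exact reparam_eq hpos hpne hs
  have hg₀ : g t₀ = η ^ (1 / n) * (k / x₀) := by
    rw [hg_eq t₀ (by simpa using rpow_nonneg hA0 _), sub_self, mul_zero, add_zero,
      one_div (1 - p), rpow_rpow_inv hA0 (sub_ne_zero.mpr hpne.symm), hA, add_sub_cancel, one_div,
      rpow_rpow_inv (by linarith) hn.ne']
  have hη_pos : 0 < η ^ (1 / n) := rpow_pos_of_pos (hη ▸ rpow_pos_of_pos hpos _) _
  rw [hg_eq t hC.le, hg₀, mul_div_mul_left _ _ hη_pos.ne',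
    add_comm (γ * n * (p - 1) * (t - t₀)), mul_div_assoc', mul_div_cancel₀ _ hx₀.ne']

/-- The reparametrized curve x₀ · g(t₀)/g(t) coincides with the general growth curve. -/
theorem stmt_2 (γ n k x₀ t₀ p : ℝ)
    (hγ : 0 < γ) (hn : 0 < n) (hk : 0 < k) (hx₀ : 0 < x₀) (hx₀k : x₀ < k)
    (hp0 : 0 < p) (hp1 : p < 1 + 1 / n) (hpne : p ≠ 1)
    (A : ℝ) (hA : A = (k / x₀) ^ n - 1)
    (hpos : 0 < A ^ (1 - p) + n * γ * (1 - p) * t₀)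
    (α η : ℝ) (hα : α = Real.exp (-(γ * n)))
    (hη : η = (A ^ (1 - p) + n * γ * (1 - p) * t₀) ^ (1 / (p - 1)))
    (g : ℝ → ℝ)
    (hg : ∀ t, g t =
      (η + (1 + η ^ (1 - p) * Real.log α * (1 - p) * t) ^ (1 / (1 - p))) ^ (1 / n)) :
    ∀ t, 0 < 1 + η ^ (1 - p) * Real.log α * (1 - p) * t →
      0 < A ^ (1 - p) + γ * n * (p - 1) * (t - t₀) →
      x₀ * (g t₀ / g t) =
        k / (1 + (γ * n * (p - 1) * (t - t₀) + A ^ (1 - p)) ^ (1 / (1 - p))) ^ (1 / n) :=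
  stmt_2_general γ n k x₀ t₀ p hn hx₀ hx₀k hpne A hA hpos α η hα hη g hg
end

section
/- Let σ > 0, y > 0, τ ∈ ℝ, and let g be differentiable and strictly positive on an open interval I with τ ∈ I. Define h(t) = −g'(t)/g(t), M_L(t) = ln y + ln(g(τ)/g(t)) − (σ²/2)(t−τ), and for t ∈ I with t > τ and x > 0, f_L(x,t) = (1/(x √(2πσ²(t−τ)))) · exp(−(ln x − M_L(t))²/(2σ²(t−τ))). Then f_L satisfies the Fokker–Planck equation of the lognormal process with drift h(t)x and infinitesimal variance σ²x²: for all t ∈ I with t > τ and all x > 0, ∂f_L/∂t (x,t) = −∂/∂x [h(t)·x·f_L(x,t)] + (σ²/2) ∂²/∂x² [x²·f_L(x,t)]. -/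
/-!
The density is `f_L(x, t) = φ(log x; M(t), σ²(t - τ)) / x`, where `φ(w; μ, v)` is the Gaussian
density of mean `μ` and variance `v`. A Gaussian whose parameters move with
`μ' = h - σ²/2` and `v' = σ²` solves the drifted heat equation `∂ₜφ = -μ' ∂_w φ + (v'/2) ∂²_w φ`,
and the substitution `w = log x` turns this equation into the Fokker–Planck equation of
`dX = h X dt + σ X dW`; the shift `-σ²/2` of the log-drift is exactly what the change of variables
produces.
-/

open Real

theorem hasDerivAt_log_const_div {g : ℝ → ℝ} {g' c t : ℝ} (hg : HasDerivAt g g' t) (hc : c ≠ 0)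
    (ht : g t ≠ 0) : HasDerivAt (fun s => log (c / g s)) (-g' / g t) t :=
  (((hasDerivAt_const t c).fun_div hg ht).log (div_ne_zero hc ht)).congr_deriv (by field_simp; ring)

noncomputable def gaussDensity (μ v w : ℝ) : ℝ :=
  (√(2 * π * v))⁻¹ * exp (-(w - μ) ^ 2 / (2 * v))

section Gaussian

variable {μ v : ℝ}

theorem hasDerivAt_gaussDensity (w : ℝ) :
    HasDerivAt (gaussDensity μ v) (-(w - μ) / v * gaussDensity μ v w) w := by
  refine (((((hasDerivAt_id' w).sub_const μ).fun_pow 2).fun_neg.div_const (2 * v)).exp.const_mul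
    (√(2 * π * v))⁻¹).congr_deriv ?_
  simp only [gaussDensity]
  push_cast
  ring

theorem hasDerivAt_deriv_gaussDensity (w : ℝ) :
    HasDerivAt (fun w => -(w - μ) / v * gaussDensity μ v w)
      (((w - μ) ^ 2 / v ^ 2 - 1 / v) * gaussDensity μ v w) w := by
  refine ((((hasDerivAt_id' w).sub_const μ).fun_neg.div_const v).mul
    (hasDerivAt_gaussDensity (μ := μ) (v := v) w)).congr_deriv ?_
  ring

end Gaussian

theorem hasDerivAt_gaussDensity_param {μ v : ℝ → ℝ} {μ' v' t : ℝ} (w : ℝ)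
    (hμ : HasDerivAt μ μ' t) (hv : HasDerivAt v v' t) (hvpos : 0 < v t) :
    HasDerivAt (fun s => gaussDensity (μ s) (v s) w)
      ((μ' * ((w - μ t) / v t) + v' / 2 * ((w - μ t) ^ 2 / v t ^ 2 - 1 / v t)) *
        gaussDensity (μ t) (v t) w) t := by
  have hsqrt := ((hv.const_mul (2 * π)).sqrt (by positivity)).fun_inv (by positivity)
  have hexp := (((hμ.const_sub w).fun_pow 2).fun_neg.fun_div (hv.const_mul 2)
    (by positivity)).exp
  refine (hsqrt.fun_mul hexp).congr_deriv ?_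
  rw [sq_sqrt (by positivity)]
  simp only [gaussDensity]
  field_simp
  ring

noncomputable def lognormalDensity (μ v x : ℝ) : ℝ :=
  gaussDensity μ v (log x) / x

theorem hasDerivAt_lognormalDensity_param {μ v : ℝ → ℝ} {μ' v' t : ℝ} (x : ℝ)
    (hμ : HasDerivAt μ μ' t) (hv : HasDerivAt v v' t) (hvpos : 0 < v t) :
    HasDerivAt (fun s => lognormalDensity (μ s) (v s) x)
      ((μ' * ((log x - μ t) / v t) + v' / 2 * ((log x - μ t) ^ 2 / v t ^ 2 - 1 / v t)) *
        gaussDensity (μ t) (v t) (log x) / x) t :=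
  (hasDerivAt_gaussDensity_param (log x) hμ hv hvpos).div_const x

section Lognormal

variable {μ v x : ℝ}

theorem hasDerivAt_const_mul_self_mul_lognormalDensity (c : ℝ) (hx : 0 < x) :
    HasDerivAt (fun y => c * y * lognormalDensity μ v y)
      (c * (-(log x - μ) / v * gaussDensity μ v (log x)) / x) x := by
  have := ((hasDerivAt_gaussDensity (μ := μ) (v := v) (log x)).comp x
    (hasDerivAt_log hx.ne')).const_mul c
  refine (this.congr_deriv (by field_simp)).congr_of_eventuallyEq ?_
  filter_upwards [Ioi_mem_nhds hx] with y (hy : 0 < y)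
  simp only [lognormalDensity, Function.comp]
  field_simp

theorem hasDerivAt_sq_mul_lognormalDensity (hx : 0 < x) :
    HasDerivAt (fun y => y ^ 2 * lognormalDensity μ v y)
      (gaussDensity μ v (log x) + -(log x - μ) / v * gaussDensity μ v (log x)) x := by
  have := (hasDerivAt_id' x).fun_mul ((hasDerivAt_gaussDensity (μ := μ) (v := v) (log x)).comp x
    (hasDerivAt_log hx.ne'))
  refine (this.congr_deriv ?_).congr_of_eventuallyEq ?_
  · simp only [Function.comp_apply]
    field_simp
  · filter_upwards [Ioi_mem_nhds hx] with y (hy : 0 < y)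
    simp only [lognormalDensity, Function.comp_apply]
    field_simp

theorem deriv_deriv_sq_mul_lognormalDensity (hx : 0 < x) :
    deriv (deriv (fun y => y ^ 2 * lognormalDensity μ v y)) x =
      (-(log x - μ) / v + ((log x - μ) ^ 2 / v ^ 2 - 1 / v)) * gaussDensity μ v (log x) / x := by
  have hderiv : deriv (fun y => y ^ 2 * lognormalDensity μ v y) =ᶠ[nhds x]
      (fun w => gaussDensity μ v w + -(w - μ) / v * gaussDensity μ v w) ∘ log := by
    filter_upwards [Ioi_mem_nhds hx] with y hy
    exact (hasDerivAt_sq_mul_lognormalDensity hy).deriv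
  rw [hderiv.deriv_eq]
  refine HasDerivAt.deriv ?_
  refine (((hasDerivAt_gaussDensity (log x)).fun_add (hasDerivAt_deriv_gaussDensity (log x))).comp x
    (hasDerivAt_log hx.ne')).congr_deriv ?_
  field_simp

end Lognormal

theorem fokkerPlanck_lognormalDensity {μ v : ℝ → ℝ} {c v' t x : ℝ}
    (hμ : HasDerivAt μ (c - v' / 2) t) (hv : HasDerivAt v v' t) (hvpos : 0 < v t) (hx : 0 < x) :
    deriv (fun s => lognormalDensity (μ s) (v s) x) t =
      -deriv (fun y => c * y * lognormalDensity (μ t) (v t) y) x +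
        v' / 2 * deriv (deriv (fun y => y ^ 2 * lognormalDensity (μ t) (v t) y)) x := by
  rw [(hasDerivAt_lognormalDensity_param x hμ hv hvpos).deriv,
    (hasDerivAt_const_mul_self_mul_lognormalDensity c hx).deriv,
    deriv_deriv_sq_mul_lognormalDensity hx]
  ring

theorem stmt_6_general (a b σ y τ : ℝ) (hσ : 0 < σ) (hτ : τ ∈ Set.Ioo a b)
    (g : ℝ → ℝ)
    (hgdiff : ∀ t ∈ Set.Ioo a b, DifferentiableAt ℝ g t)
    (hgpos : ∀ t ∈ Set.Ioo a b, 0 < g t)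
    (h M : ℝ → ℝ) (fL : ℝ → ℝ → ℝ)
    (hh : ∀ t, h t = -(deriv g t) / g t)
    (hM : ∀ t, M t = Real.log y + Real.log (g τ / g t) - σ ^ 2 / 2 * (t - τ))
    (hf : ∀ x t, fL x t =
      1 / (x * Real.sqrt (2 * Real.pi * σ ^ 2 * (t - τ))) *
        Real.exp (-(Real.log x - M t) ^ 2 / (2 * σ ^ 2 * (t - τ)))) :
    ∀ t ∈ Set.Ioo a b, τ < t → ∀ x : ℝ, 0 < x →
      deriv (fun t' => fL x t') t =
        -(deriv (fun x' => h t * x' * fL x' t) x) +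
          σ ^ 2 / 2 * deriv (deriv (fun x' => x' ^ 2 * fL x' t)) x := by
  intro t ht htτ x hx
  have hM' : HasDerivAt M (h t - σ ^ 2 / 2) t := by
    rw [show M = _ from funext hM, hh]
    refine (((hasDerivAt_log_const_div (hgdiff t ht).hasDerivAt (hgpos τ hτ).ne'
      (hgpos t ht).ne').const_add (log y)).sub
      (((hasDerivAt_id' t).sub_const τ).const_mul (σ ^ 2 / 2))).congr_deriv ?_
    ring
  have hv : HasDerivAt (fun s => σ ^ 2 * (s - τ)) (σ ^ 2) t := by
    simpa using ((hasDerivAt_id' t).sub_const τ).const_mul (σ ^ 2)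
  have hfL : fL = fun x s => lognormalDensity (M s) (σ ^ 2 * (s - τ)) x := by
    funext x s
    rw [hf, lognormalDensity, gaussDensity]
    ring_nf
  rw [hfL]
  exact fokkerPlanck_lognormalDensity hM' hv (mul_pos (pow_pos hσ 2) (sub_pos.2 htτ)) hx

/-- The lognormal transition density of the multiplicative-noise process satisfies the
Fokker–Planck equation with drift h(t)x and infinitesimal variance σ²x². -/
theorem stmt_6 (a b σ y τ : ℝ) (hσ : 0 < σ) (hy : 0 < y) (hτ : τ ∈ Set.Ioo a b)
    (g : ℝ → ℝ)
    (hgdiff : ∀ t ∈ Set.Ioo a b, DifferentiableAt ℝ g t)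
    (hgpos : ∀ t ∈ Set.Ioo a b, 0 < g t)
    (h M : ℝ → ℝ) (fL : ℝ → ℝ → ℝ)
    (hh : ∀ t, h t = -(deriv g t) / g t)
    (hM : ∀ t, M t = Real.log y + Real.log (g τ / g t) - σ ^ 2 / 2 * (t - τ))
    (hf : ∀ x t, fL x t =
      1 / (x * Real.sqrt (2 * Real.pi * σ ^ 2 * (t - τ))) *
        Real.exp (-(Real.log x - M t) ^ 2 / (2 * σ ^ 2 * (t - τ)))) :
    ∀ t ∈ Set.Ioo a b, τ < t → ∀ x : ℝ, 0 < x →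
      deriv (fun t' => fL x t') t =
        -(deriv (fun x' => h t * x' * fL x' t) x) +
          σ ^ 2 / 2 * deriv (deriv (fun x' => x' ^ 2 * fL x' t)) x :=
  stmt_6_general a b σ y τ hσ hτ g hgdiff hgpos h M fL hh hM hf
end

section
/- Let m, k₁, k₂ be real C¹ functions on an interval T with k₂(t) ≠ 0 on T, and suppose r(t) = k₁(t)/k₂(t) is strictly increasing on T. For τ < t in T, let f[x,t|y,τ] denote the Gaussian density in x with mean m(t) + (k₂(t)/k₂(τ))(y − m(τ)) and variance k₂(t)(k₁(t) − (k₂(t)/k₂(τ)) k₁(τ)) (which is positive), and for a differentiable boundary s define Ψ[s(t),t|y,τ] = { (s'(t)−m'(t))/2 − ((s(t)−m(t))/2)·(k₁'(t)k₂(τ)−k₂'(t)k₁(τ))/(k₁(t)k₂(τ)−k₂(t)k₁(τ)) − ((y−m(τ))/2)·(k₂'(t)k₁(t)−k₂(t)k₁'(t))/(k₁(t)k₂(τ)−k₂(t)k₁(τ)) } · f[s(t),t|y,τ]. Then for every d₁, d₂ ∈ ℝ, the boundary s̃(t) = m(t) + d₁ k₁(t) + d₂ k₂(t) satisfies Ψ[s̃(t),t|s̃(τ),τ]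 = 0 for all τ, t ∈ T with τ < t. -/
/-!
Along `s̃ = m + d₁ k₁ + d₂ k₂` the factor multiplying `f` in `Ψ` is linear in `(d₁, d₂)`, and
it vanishes for `s̃ - m = k₁` and for `s̃ - m = k₂`: its two fractions `α`, `β` are, by Cramer's
rule, the solution of `α kᵢ(t) + β kᵢ(τ) = kᵢ'(t)` (`i = 1, 2`). The determinant
`k₁(t) k₂(τ) - k₂(t) k₁(τ)` of that system is nonzero because `k₁/k₂` is strictly increasing.
-/

lemma mul_sub_mul_ne_zero_of_div_ne {K : Type*} [Field K] {a₁ a₂ b₁ b₂ : K}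
    (ha : a₂ ≠ 0) (hb : b₂ ≠ 0) (h : b₁ / b₂ ≠ a₁ / a₂) : a₁ * b₂ - a₂ * b₁ ≠ 0 :=
  sub_ne_zero.mpr fun h' => h ((div_eq_div_iff hb ha).mpr (by linear_combination -h'))

lemma gaussMarkov_kernel_factor_eq_zero {K : Type*} [Field K]
    {μ μ' ν a₁ a₂ a₁' a₂' b₁ b₂ : K} (d₁ d₂ : K) (hD : a₁ * b₂ - a₂ * b₁ ≠ 0) :
    (μ' + d₁ * a₁' + d₂ * a₂' - μ') / 2 -
        (μ + d₁ * a₁ + d₂ * a₂ - μ) / 2 * ((a₁' * b₂ - a₂' * b₁) / (a₁ * b₂ - a₂ * b₁)) -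
        (ν + d₁ * b₁ + d₂ * b₂ - ν) / 2 * ((a₂' * a₁ - a₂ * a₁') / (a₁ * b₂ - a₂ * b₁)) = 0 := by
  field_simp
  ring

theorem stmt_12_general (a b : ℝ) (m k₁ k₂ : ℝ → ℝ)
    (hm : ContDiffOn ℝ 1 m (Set.Ioo a b))
    (hk₁ : ContDiffOn ℝ 1 k₁ (Set.Ioo a b))
    (hk₂ : ContDiffOn ℝ 1 k₂ (Set.Ioo a b))
    (hk₂ne : ∀ t ∈ Set.Ioo a b, k₂ t ≠ 0)
    (hr : StrictMonoOn (fun t => k₁ t / k₂ t) (Set.Ioo a b))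
    (f : ℝ → ℝ → ℝ → ℝ → ℝ)
    (Ψ : (ℝ → ℝ) → ℝ → ℝ → ℝ → ℝ)
    (hΨ : ∀ s : ℝ → ℝ, ∀ t y τ, Ψ s t y τ =
      ((deriv s t - deriv m t) / 2 -
        (s t - m t) / 2 *
          ((deriv k₁ t * k₂ τ - deriv k₂ t * k₁ τ) / (k₁ t * k₂ τ - k₂ t * k₁ τ)) -
        (y - m τ) / 2 *
          ((deriv k₂ t * k₁ t - k₂ t * deriv k₁ t) / (k₁ t * k₂ τ - k₂ t * k₁ τ))) *
        f (s t) t y τ) :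
    ∀ d₁ d₂ : ℝ, ∀ τ ∈ Set.Ioo a b, ∀ t ∈ Set.Ioo a b, τ < t →
      Ψ (fun u => m u + d₁ * k₁ u + d₂ * k₂ u) t
        (m τ + d₁ * k₁ τ + d₂ * k₂ τ) τ = 0 := by
  intro d₁ d₂ τ hτ t ht hτt
  have hdiff {g : ℝ → ℝ} (hg : ContDiffOn ℝ 1 g (Set.Ioo a b)) : HasDerivAt g (deriv g t) t :=
    ((hg.differentiableOn one_ne_zero).differentiableAt (isOpen_Ioo.mem_nhds ht)).hasDerivAt
  have hds : deriv (fun u => m u + d₁ * k₁ u + d₂ * k₂ u) t =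
      deriv m t + d₁ * deriv k₁ t + d₂ * deriv k₂ t :=
    (((hdiff hm).add ((hdiff hk₁).const_mul d₁)).add ((hdiff hk₂).const_mul d₂)).deriv
  have hD : k₁ t * k₂ τ - k₂ t * k₁ τ ≠ 0 :=
    mul_sub_mul_ne_zero_of_div_ne (hk₂ne t ht) (hk₂ne τ hτ) (hr hτ ht hτt).ne
  rw [hΨ, hds]
  exact mul_eq_zero_of_left (gaussMarkov_kernel_factor_eq_zero d₁ d₂ hD) _

/-- For boundaries of the form s̃(t) = m(t) + d₁k₁(t) + d₂k₂(t), the Volterra kernel Ψ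
vanishes along the boundary: Ψ[s̃(t),t|s̃(τ),τ] = 0. -/
theorem stmt_12 (a b : ℝ) (m k₁ k₂ : ℝ → ℝ)
    (hm : ContDiffOn ℝ 1 m (Set.Ioo a b))
    (hk₁ : ContDiffOn ℝ 1 k₁ (Set.Ioo a b))
    (hk₂ : ContDiffOn ℝ 1 k₂ (Set.Ioo a b))
    (hk₂ne : ∀ t ∈ Set.Ioo a b, k₂ t ≠ 0)
    (hr : StrictMonoOn (fun t => k₁ t / k₂ t) (Set.Ioo a b))
    (f : ℝ → ℝ → ℝ → ℝ → ℝ)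
    (hf : ∀ x t y τ, f x t y τ =
      1 / Real.sqrt (2 * Real.pi * (k₂ t * (k₁ t - k₂ t / k₂ τ * k₁ τ))) *
        Real.exp (-(x - (m t + k₂ t / k₂ τ * (y - m τ))) ^ 2 /
          (2 * (k₂ t * (k₁ t - k₂ t / k₂ τ * k₁ τ)))))
    (Ψ : (ℝ → ℝ) → ℝ → ℝ → ℝ → ℝ)
    (hΨ : ∀ s : ℝ → ℝ, ∀ t y τ, Ψ s t y τ =
      ((deriv s t - deriv m t) / 2 -
        (s t - m t) / 2 *
          ((deriv k₁ t * k₂ τ - deriv k₂ t * k₁ τ) / (k₁ t * k₂ τ - k₂ t * k₁ τ)) -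
        (y - m τ) / 2 *
          ((deriv k₂ t * k₁ t - k₂ t * deriv k₁ t) / (k₁ t * k₂ τ - k₂ t * k₁ τ))) *
        f (s t) t y τ) :
    ∀ d₁ d₂ : ℝ, ∀ τ ∈ Set.Ioo a b, ∀ t ∈ Set.Ioo a b, τ < t →
      Ψ (fun u => m u + d₁ * k₁ u + d₂ * k₂ u) t
        (m τ + d₁ * k₁ τ + d₂ * k₂ τ) τ = 0 :=
  stmt_12_general a b m k₁ k₂ hm hk₁ hk₂ hk₂ne hr f Ψ hΨ
end

section
/- Let m, k₁, k₂ be real C¹ functions on an interval T with k₂(t) ≠ 0 on T and r(t) = k₁(t)/k₂(t) strictly increasing on T. For τ < t in T, let f[x,t|y,τ] denote the Gaussian density in x with mean m(t) + (k₂(t)/k₂(τ))(y − m(τ)) and variance k₂(t)(k₁(t) − (k₂(t)/k₂(τ)) k₁(τ)), and define Ψ as the Volterra kernel Ψ[s(t),t|y,τ] = { (s'(t)−m'(t))/2 − ((s(t)−m(t))/2)·(k₁'(t)k₂(τ)−k₂'(t)k₁(τ))/(k₁(t)k₂(τ)−k₂(t)k₁(τ)) − ((y−m(τ))/2)·(k₂'(t)k₁(t)−k₂(t)k₁'(t))/(k₁(t)k₂(τ)−k₂(t)k₁(τ))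 } · f[s(t),t|y,τ]. Fix t₀ ∈ T, d₁, d₂ ∈ ℝ and set s̃(t) = m(t) + d₁ k₁(t) + d₂ k₂(t). Then for every x₀ with x₀ < s̃(t₀) and every t ∈ T with t > t₀, −2 Ψ[s̃(t),t|x₀,t₀] = ((s̃(t₀) − x₀)/(r(t) − r(t₀))) · (k₂(t)/k₂(t₀)) · r'(t) · f[s̃(t),t|x₀,t₀]; that is, the free term of the Volterra equation equals the closed-form first-passage-time density g[s̃(t),t|x₀,t₀]. -/
/-!
The factor `f[s̃(t),t|x₀,t₀]` is common to both sides, so only the bracket of `Ψ` matters.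
Since `s̃ - m` lies in the span of `k₁, k₂`, the boundary terms of the bracket collapse:
with `D = k₁(t)k₂(t₀) - k₂(t)k₁(t₀)` and `W = k₁'(t)k₂(t) - k₁(t)k₂'(t)`, minus twice the bracket
is `(s̃(t₀) - x₀) W / D`. Finally `W = k₂(t)² r'(t)` and `D = k₂(t)k₂(t₀)(r(t) - r(t₀))`, which is
nonzero because `r` is strictly increasing.
-/

theorem neg_two_mul_kernel_bracket_eq (d₁ d₂ y mτ k₁t k₂t k₁τ k₂τ k₁' k₂' : ℝ)
    (hD : k₁t * k₂τ - k₂t * k₁τ ≠ 0) :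
    -2 * ((d₁ * k₁' + d₂ * k₂') / 2 -
        (d₁ * k₁t + d₂ * k₂t) / 2 * ((k₁' * k₂τ - k₂' * k₁τ) / (k₁t * k₂τ - k₂t * k₁τ)) -
        (y - mτ) / 2 * ((k₂' * k₁t - k₂t * k₁') / (k₁t * k₂τ - k₂t * k₁τ))) =
      (mτ + d₁ * k₁τ + d₂ * k₂τ - y) * (k₁' * k₂t - k₁t * k₂') / (k₁t * k₂τ - k₂t * k₁τ) := by
  field_simp
  ring

theorem mul_div_det_eq_div_ratio_sub (c w k₁t k₂t k₁τ k₂τ : ℝ) (hk₂t : k₂t ≠ 0)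
    (hk₂τ : k₂τ ≠ 0) :
    c * w / (k₁t * k₂τ - k₂t * k₁τ) =
      c / (k₁t / k₂t - k₁τ / k₂τ) * (k₂t / k₂τ) * (w / k₂t ^ 2) := by
  rw [div_sub_div _ _ hk₂t hk₂τ]
  field_simp

theorem stmt_13_general (a b : ℝ) (m k₁ k₂ : ℝ → ℝ)
    (hm : ContDiffOn ℝ 1 m (Set.Ioo a b))
    (hk₁ : ContDiffOn ℝ 1 k₁ (Set.Ioo a b))
    (hk₂ : ContDiffOn ℝ 1 k₂ (Set.Ioo a b))
    (hk₂ne : ∀ t ∈ Set.Ioo a b, k₂ t ≠ 0)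
    (r : ℝ → ℝ) (hrdef : ∀ t, r t = k₁ t / k₂ t)
    (hr : StrictMonoOn r (Set.Ioo a b))
    (f : ℝ → ℝ → ℝ → ℝ → ℝ)
    (Ψ : (ℝ → ℝ) → ℝ → ℝ → ℝ → ℝ)
    (hΨ : ∀ s : ℝ → ℝ, ∀ t y τ, Ψ s t y τ =
      ((deriv s t - deriv m t) / 2 -
        (s t - m t) / 2 *
          ((deriv k₁ t * k₂ τ - deriv k₂ t * k₁ τ) / (k₁ t * k₂ τ - k₂ t * k₁ τ)) -
        (y - m τ) / 2 *
          ((deriv k₂ t * k₁ t - k₂ t * deriv k₁ t) / (k₁ t * k₂ τ - k₂ t * k₁ τ))) *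
        f (s t) t y τ)
    (t₀ : ℝ) (ht₀ : t₀ ∈ Set.Ioo a b) (d₁ d₂ : ℝ)
    (s : ℝ → ℝ) (hs : ∀ t, s t = m t + d₁ * k₁ t + d₂ * k₂ t) :
    ∀ x₀ : ℝ, x₀ < s t₀ → ∀ t ∈ Set.Ioo a b, t₀ < t →
      -2 * Ψ s t x₀ t₀ =
        (s t₀ - x₀) / (r t - r t₀) * (k₂ t / k₂ t₀) * deriv r t * f (s t) t x₀ t₀ := by
  intro x₀ _ t ht ht₀t
  have hk₂t := hk₂ne t ht
  have hk₂t₀ := hk₂ne t₀ ht₀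
  have hdiff {g : ℝ → ℝ} (hg : ContDiffOn ℝ 1 g (Set.Ioo a b)) : DifferentiableAt ℝ g t :=
    (hg.differentiableOn one_ne_zero).differentiableAt (isOpen_Ioo.mem_nhds ht)
  have hds : deriv s t = deriv m t + d₁ * deriv k₁ t + d₂ * deriv k₂ t := by
    rw [funext hs]
    exact (((hdiff hm).hasDerivAt.add ((hdiff hk₁).hasDerivAt.const_mul d₁)).add
      ((hdiff hk₂).hasDerivAt.const_mul d₂)).deriv
  have hdr : deriv r t = (deriv k₁ t * k₂ t - k₁ t * deriv k₂ t) / k₂ t ^ 2 := by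
    rw [show r = k₁ / k₂ from funext hrdef]
    exact deriv_div (hdiff hk₁) (hdiff hk₂) hk₂t
  have hD : k₁ t * k₂ t₀ - k₂ t * k₁ t₀ ≠ 0 := by
    have hne : k₁ t / k₂ t - k₁ t₀ / k₂ t₀ ≠ 0 := by
      rw [← hrdef, ← hrdef]
      exact sub_ne_zero.mpr (hr ht₀ ht ht₀t).ne'
    rw [div_sub_div _ _ hk₂t hk₂t₀] at hne
    exact left_ne_zero_of_mul hne
  have hbracket := neg_two_mul_kernel_bracket_eq d₁ d₂ x₀ (m t₀) (k₁ t) (k₂ t) (k₁ t₀) (k₂ t₀)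
    (deriv k₁ t) (deriv k₂ t) hD
  rw [mul_div_det_eq_div_ratio_sub _ _ _ _ _ _ hk₂t hk₂t₀] at hbracket
  rw [hΨ, hds, hdr, hrdef t, hrdef t₀, hs t, hs t₀]
  linear_combination f (m t + d₁ * k₁ t + d₂ * k₂ t) t x₀ t₀ * hbracket

/-- For boundaries s̃(t) = m(t) + d₁k₁(t) + d₂k₂(t), the free term −2Ψ of the Volterra
equation equals the closed-form first-passage-time density. -/
theorem stmt_13 (a b : ℝ) (m k₁ k₂ : ℝ → ℝ)
    (hm : ContDiffOn ℝ 1 m (Set.Ioo a b))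
    (hk₁ : ContDiffOn ℝ 1 k₁ (Set.Ioo a b))
    (hk₂ : ContDiffOn ℝ 1 k₂ (Set.Ioo a b))
    (hk₂ne : ∀ t ∈ Set.Ioo a b, k₂ t ≠ 0)
    (r : ℝ → ℝ) (hrdef : ∀ t, r t = k₁ t / k₂ t)
    (hr : StrictMonoOn r (Set.Ioo a b))
    (f : ℝ → ℝ → ℝ → ℝ → ℝ)
    (hf : ∀ x t y τ, f x t y τ =
      1 / Real.sqrt (2 * Real.pi * (k₂ t * (k₁ t - k₂ t / k₂ τ * k₁ τ))) *
        Real.exp (-(x - (m t + k₂ t / k₂ τ * (y - m τ))) ^ 2 /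
          (2 * (k₂ t * (k₁ t - k₂ t / k₂ τ * k₁ τ)))))
    (Ψ : (ℝ → ℝ) → ℝ → ℝ → ℝ → ℝ)
    (hΨ : ∀ s : ℝ → ℝ, ∀ t y τ, Ψ s t y τ =
      ((deriv s t - deriv m t) / 2 -
        (s t - m t) / 2 *
          ((deriv k₁ t * k₂ τ - deriv k₂ t * k₁ τ) / (k₁ t * k₂ τ - k₂ t * k₁ τ)) -
        (y - m τ) / 2 *
          ((deriv k₂ t * k₁ t - k₂ t * deriv k₁ t) / (k₁ t * k₂ τ - k₂ t * k₁ τ))) *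
        f (s t) t y τ)
    (t₀ : ℝ) (ht₀ : t₀ ∈ Set.Ioo a b) (d₁ d₂ : ℝ)
    (s : ℝ → ℝ) (hs : ∀ t, s t = m t + d₁ * k₁ t + d₂ * k₂ t) :
    ∀ x₀ : ℝ, x₀ < s t₀ → ∀ t ∈ Set.Ioo a b, t₀ < t →
      -2 * Ψ s t x₀ t₀ =
        (s t₀ - x₀) / (r t - r t₀) * (k₂ t / k₂ t₀) * deriv r t * f (s t) t x₀ t₀ :=
  stmt_13_general a b m k₁ k₂ hm hk₁ hk₂ hk₂ne r hrdef hr f Ψ hΨ t₀ ht₀ d₁ d₂ s hs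
end

section
/- Let σ > 0, t > t₀, c₁ < c₂, set Δ = t − t₀, d = c₂ − c₁ and c = (c₁ + c₂)/2. Then the bilateral series (1/√(2πσ²Δ³)) · Σ_{n ∈ ℤ} exp(−2n²d²/(σ²Δ)) · { (c − c₁ + 2nd)·exp(−2nd(c−c₁)/(σ²Δ))·exp(−(c₁−c)²/(2σ²Δ)) + (c₂ − c − 2nd)·exp(2nd(c₂−c)/(σ²Δ))·exp(−(c₂−c)²/(2σ²Δ)) } converges and equals (d/√(2πσ²Δ³)) · exp(−d²/(8σ²Δ)) · { 1 + Σ_{n ≥ 1} exp(−2n²d²/(σ²Δ)) · [ (1 + 4n)·exp(−n d²/(σ²Δ)) + (1 − 4n)·exp(n d²/(σ²Δ)) ] }. -/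
/-!
At the midpoint `c - c₁ = c₂ - c = d / 2`, so with `k = d² / (σ² Δ)` the `n`-th term of the
bilateral series is `d e^{-k/8} / √(2πσ²Δ³)` times `K(n) / 2`, where
`K(x) = e^{-2x²k} ((1 + 4x) e^{-xk} + (1 - 4x) e^{xk})`. The kernel `K` is even with `K(0) = 2`
and is dominated by a polynomial times a Gaussian, so the series over `ℤ` converges and folds
onto the terms with `n ≥ 1`.
-/

open Real

theorem HasSum.int_of_even {M : Type*} [AddCommMonoid M] [TopologicalSpace M] [ContinuousAdd M]
    {f : ℤ → M} {a : M} (hf : ∀ n, f (-n) = f n) (h : HasSum (fun n : ℕ ↦ f (n + 1)) a) :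
    HasSum f (f 0 + 2 • a) := by
  have h' : HasSum (fun n : ℕ ↦ f (-(n + 1))) a := by simpa only [hf] using h
  convert h.of_add_one_of_neg_add_one h' using 1
  rw [two_nsmul, add_comm a, add_assoc, add_left_comm]

noncomputable def stripKernel (k x : ℝ) : ℝ :=
  exp (-2 * x ^ 2 * k) * ((1 + 4 * x) * exp (-x * k) + (1 - 4 * x) * exp (x * k))

section stripKernel

variable {k : ℝ}

theorem stripKernel_neg (x : ℝ) : stripKernel k (-x) = stripKernel k x := by
  simp only [stripKernel, neg_sq, neg_neg, mul_neg]
  ring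

@[simp] theorem stripKernel_zero : stripKernel k 0 = 2 := by
  norm_num [stripKernel]

theorem abs_stripKernel_le (hk : 0 ≤ k) (x : ℝ) :
    |stripKernel k x| ≤ 2 * (1 + 4 * |x|) * exp (-(2 * k * x ^ 2 - k * |x|)) := by
  have hterm : ∀ a y, |a| ≤ |x| → y ≤ |x| →
      |(1 + 4 * a) * exp (y * k)| ≤ (1 + 4 * |x|) * exp (|x| * k) := by
    intro a y ha hy
    rw [abs_mul, abs_exp]
    gcongr
    calc |1 + 4 * a| ≤ 1 + 4 * |a| := (abs_add_le _ _).trans_eq (by simp [abs_mul])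
      _ ≤ 1 + 4 * |x| := by linarith
  have h₁ := hterm x (-x) le_rfl (neg_le_abs x)
  have h₂ := hterm (-x) x (abs_neg x).le (le_abs_self x)
  rw [mul_neg, ← sub_eq_add_neg] at h₂
  calc |stripKernel k x|
      ≤ exp (-2 * x ^ 2 * k) * (2 * ((1 + 4 * |x|) * exp (|x| * k))) := by
        rw [stripKernel, abs_mul, abs_exp]
        gcongr
        exact (abs_add_le _ _).trans (by linarith)
    _ = 2 * (1 + 4 * |x|) * exp (-(2 * k * x ^ 2 - k * |x|)) := by
        rw [show -(2 * k * x ^ 2 - k * |x|) = -2 * x ^ 2 * k + |x| * k by ring, exp_add]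
        ring

theorem summable_stripKernel (hk : 0 < k) : Summable fun n : ℤ ↦ stripKernel k n := by
  have hT : 0 < 2 * k / π := by positivity
  have hbound := ((summable_pow_mul_jacobiTheta₂_term_bound (k / (2 * π)) hT 0).add
    ((summable_pow_mul_jacobiTheta₂_term_bound (k / (2 * π)) hT 1).mul_left 4)).mul_left 2
  refine .of_norm_bounded (hbound.congr fun n ↦ ?_) fun n ↦ abs_stripKernel_le hk.le n
  have : -π * (2 * k / π * (n : ℝ) ^ 2 - 2 * (k / (2 * π)) * |(n : ℝ)|) =
      -(2 * k * (n : ℝ) ^ 2 - k * |(n : ℝ)|) := by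
    field_simp
  simp only [pow_zero, pow_one, Int.cast_abs, this]
  ring

theorem hasSum_stripKernel_div_two (hk : 0 < k) :
    HasSum (fun n : ℤ ↦ stripKernel k n / 2) (1 + ∑' n : ℕ, stripKernel k ((n : ℝ) + 1)) := by
  have hshift : Summable fun n : ℕ ↦ stripKernel k ((n : ℤ) + 1 : ℤ) :=
    (summable_stripKernel hk).comp_injective fun m n h ↦ by simpa using h
  have h := hshift.hasSum.int_of_even (f := fun n : ℤ ↦ stripKernel k n) fun n ↦ by
    simpa using stripKernel_neg n
  simpa [nsmul_eq_mul, add_div] using h.div_const 2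

end stripKernel

theorem imagePair_midpoint_eq {c₁ c₂ d c : ℝ} (hd : d = c₂ - c₁) (hc : c = (c₁ + c₂) / 2)
    (σ Δ x : ℝ) :
    exp (-2 * x ^ 2 * d ^ 2 / (σ ^ 2 * Δ)) *
        ((c - c₁ + 2 * x * d) * exp (-2 * x * d * (c - c₁) / (σ ^ 2 * Δ)) *
            exp (-(c₁ - c) ^ 2 / (2 * σ ^ 2 * Δ)) +
          (c₂ - c - 2 * x * d) * exp (2 * x * d * (c₂ - c) / (σ ^ 2 * Δ)) *
            exp (-(c₂ - c) ^ 2 / (2 * σ ^ 2 * Δ))) =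
      d / 2 * exp (-d ^ 2 / (8 * σ ^ 2 * Δ)) * stripKernel (d ^ 2 / (σ ^ 2 * Δ)) x := by
  have hdist₁ : c - c₁ = d / 2 := by rw [hd, hc]; ring
  have hdist₂ : c₂ - c = d / 2 := by rw [hd, hc]; ring
  rw [hdist₁, hdist₂, show c₁ - c = -(d / 2) by linarith, neg_sq]
  have hexp : ∀ a y, a = 2 * y →
      exp (-2 * x ^ 2 * d ^ 2 / (σ ^ 2 * Δ)) * exp (a * d * (d / 2) / (σ ^ 2 * Δ)) *
        exp (-(d / 2) ^ 2 / (2 * σ ^ 2 * Δ)) = exp (-d ^ 2 / (8 * σ ^ 2 * Δ)) *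
          exp (-2 * x ^ 2 * (d ^ 2 / (σ ^ 2 * Δ))) * exp (y * (d ^ 2 / (σ ^ 2 * Δ))) := by
    rintro a y rfl
    simp only [← exp_add]
    ring_nf
  rw [stripKernel]
  linear_combination (d / 2 + 2 * x * d) * hexp (-2 * x) (-x) (by ring) +
    (d / 2 - 2 * x * d) * hexp (2 * x) x rfl

/-- The bilateral series for the first-exit-time density of a Wiener process from a strip
with constant boundaries, started at the midpoint, converges and equals its simplified
one-sided-series form. -/
theorem stmt_14 (σ t t₀ c₁ c₂ : ℝ) (hσ : 0 < σ) (ht : t₀ < t) (hc : c₁ < c₂)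
    (Δ d c : ℝ) (hΔ : Δ = t - t₀) (hd : d = c₂ - c₁) (hc' : c = (c₁ + c₂) / 2) :
    HasSum
      (fun n : ℤ =>
        1 / Real.sqrt (2 * Real.pi * σ ^ 2 * Δ ^ 3) *
          (Real.exp (-2 * (n : ℝ) ^ 2 * d ^ 2 / (σ ^ 2 * Δ)) *
            ((c - c₁ + 2 * (n : ℝ) * d) *
                Real.exp (-2 * (n : ℝ) * d * (c - c₁) / (σ ^ 2 * Δ)) *
                Real.exp (-(c₁ - c) ^ 2 / (2 * σ ^ 2 * Δ)) +
              (c₂ - c - 2 * (n : ℝ) * d) *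
                Real.exp (2 * (n : ℝ) * d * (c₂ - c) / (σ ^ 2 * Δ)) *
                Real.exp (-(c₂ - c) ^ 2 / (2 * σ ^ 2 * Δ)))))
      (d / Real.sqrt (2 * Real.pi * σ ^ 2 * Δ ^ 3) *
        Real.exp (-d ^ 2 / (8 * σ ^ 2 * Δ)) *
        (1 + ∑' n : ℕ,
          Real.exp (-2 * ((n : ℝ) + 1) ^ 2 * d ^ 2 / (σ ^ 2 * Δ)) *
            ((1 + 4 * ((n : ℝ) + 1)) *
                Real.exp (-((n : ℝ) + 1) * d ^ 2 / (σ ^ 2 * Δ)) +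
              (1 - 4 * ((n : ℝ) + 1)) *
                Real.exp (((n : ℝ) + 1) * d ^ 2 / (σ ^ 2 * Δ))))) := by
  have hk : 0 < d ^ 2 / (σ ^ 2 * Δ) :=
    div_pos (pow_pos (by linarith) 2) (mul_pos (pow_pos hσ 2) (by linarith))
  simp only [imagePair_midpoint_eq hd hc']
  have hterm : ∀ x : ℝ, exp (-2 * x ^ 2 * d ^ 2 / (σ ^ 2 * Δ)) *
      ((1 + 4 * x) * exp (-x * d ^ 2 / (σ ^ 2 * Δ)) + (1 - 4 * x) * exp (x * d ^ 2 / (σ ^ 2 * Δ))) =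
      stripKernel (d ^ 2 / (σ ^ 2 * Δ)) x := fun x ↦ by
    simp only [stripKernel, mul_div_assoc]
  simp only [hterm]
  exact ((hasSum_stripKernel_div_two hk).mul_left _).congr_fun fun n ↦ by ring
end

section
/- Let γ > 0, n > 0, k > 0, 0 < x₀ < k, and let p satisfy 1 < p < 1 + 1/n. Set Aₙ = (k/x₀)ⁿ − 1 and x(t) = k / (1 + [γ n (p−1)(t−t₀) + Aₙ^{1−p}]^{1/(1−p)})^{1/n}. Then the curve tends to the carrying capacity: lim_{t → ∞} x(t) = k. -/
/-!
Since `p > 1`, the exponent `1 / (1 - p)` is negative while its base grows linearly in `t`,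
so the bracket tends to `0`; hence the denominator tends to `1 ^ (1 / n) = 1` and `x t → k`.
-/

open Real Filter Topology

theorem tendsto_affine_rpow_neg_atTop {c q : ℝ} (hc : 0 < c) (hq : 0 < q) (t₀ b : ℝ) :
    Tendsto (fun t => (c * (t - t₀) + b) ^ (-q)) atTop (𝓝 0) := by
  have h_affine : Tendsto (fun t => c * (t - t₀) + b) atTop atTop :=
    tendsto_atTop_add_const_right _ b
      ((tendsto_atTop_add_const_right atTop (-t₀) tendsto_id).const_mul_atTop hc)
  exact (tendsto_rpow_neg_atTop hq).comp h_affine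

theorem Filter.Tendsto.div_one_add_rpow {α : Type*} {l : Filter α} {f : α → ℝ}
    (hf : Tendsto f l (𝓝 0)) (k r : ℝ) :
    Tendsto (fun a => k / (1 + f a) ^ r) l (𝓝 k) := by
  have h_denom : Tendsto (fun a => (1 + f a) ^ r) l (𝓝 1) := by
    simpa using ((tendsto_const_nhds (x := (1 : ℝ))).add hf).rpow_const
      (p := r) (Or.inl (by norm_num))
  have h_quot := (tendsto_const_nhds (x := k)).div h_denom one_ne_zero
  rwa [div_one] at h_quot

theorem stmt_15_general (γ n k t₀ p : ℝ)
    (hγ : 0 < γ) (hn : 0 < n)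
    (hp1 : 1 < p)
    (A : ℝ)
    (x : ℝ → ℝ)
    (hx : ∀ t, x t =
      k / (1 + (γ * n * (p - 1) * (t - t₀) + A ^ (1 - p)) ^ (1 / (1 - p))) ^ (1 / n)) :
    Tendsto x atTop (nhds k) := by
  have hp : 0 < p - 1 := sub_pos.mpr hp1
  have h_exp : 1 / (1 - p) = -(1 / (p - 1)) := by rw [← neg_sub, div_neg]
  rw [funext hx]
  refine Tendsto.div_one_add_rpow ?_ k (1 / n)
  rw [h_exp]
  exact tendsto_affine_rpow_neg_atTop (by positivity) (by positivity) t₀ _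

/-- For 1 < p < 1 + 1/n, the general growth curve tends to the carrying capacity k. -/
theorem stmt_15 (γ n k x₀ t₀ p : ℝ)
    (hγ : 0 < γ) (hn : 0 < n) (hk : 0 < k) (hx₀ : 0 < x₀) (hx₀k : x₀ < k)
    (hp1 : 1 < p) (hp2 : p < 1 + 1 / n)
    (A : ℝ) (hA : A = (k / x₀) ^ n - 1)
    (x : ℝ → ℝ)
    (hx : ∀ t, x t =
      k / (1 + (γ * n * (p - 1) * (t - t₀) + A ^ (1 - p)) ^ (1 / (1 - p))) ^ (1 / n)) :
    Tendsto x atTop (nhds k) :=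
  stmt_15_general γ n k t₀ p hγ hn hp1 A x hx
end

section
/- Let γ > 0, n > 0, k > 0, 0 < x₀ < k, and let p satisfy 0 < p < 1. Set Aₙ = (k/x₀)ⁿ − 1, x(t) = k / (1 + [γ n (p−1)(t−t₀) + Aₙ^{1−p}]^{1/(1−p)})^{1/n}, and t* = t₀ + Aₙ^{1−p}/(γ n (1−p)). Then the curve reaches the carrying capacity in finite time: x(t*) = k, while x(t) < k for every t with t₀ ≤ t < t*. -/
/-!
The bracket of the growth curve is affine in `t`: it equals `γ n (1 - p) (t* - t)`. It therefore
vanishes at `t*`, where `0 ^ (1 / (1 - p)) = 0` makes the denominator `1`, and it is positive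
before `t*`, where the denominator exceeds `1`.
-/

open Real

lemma div_one_add_zero_rpow_rpow {a : ℝ} (ha : a ≠ 0) (k b : ℝ) :
    k / (1 + (0 : ℝ) ^ a) ^ b = k := by
  rw [zero_rpow ha, add_zero, one_rpow, div_one]

lemma div_one_add_rpow_rpow_lt_self {k s b : ℝ} (hk : 0 < k) (hs : 0 < s) (hb : 0 < b) (a : ℝ) :
    k / (1 + s ^ a) ^ b < k :=
  div_lt_self hk <| one_lt_rpow (lt_add_of_pos_right 1 (rpow_pos_of_pos hs a)) hb

theorem stmt_16_general (γ n k t₀ p : ℝ)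
    (hγ : 0 < γ) (hn : 0 < n) (hk : 0 < k)
    (hp1 : p < 1)
    (A : ℝ)
    (x : ℝ → ℝ)
    (hx : ∀ t, x t =
      k / (1 + (γ * n * (p - 1) * (t - t₀) + A ^ (1 - p)) ^ (1 / (1 - p))) ^ (1 / n))
    (tstar : ℝ) (htstar : tstar = t₀ + A ^ (1 - p) / (γ * n * (1 - p))) :
    x tstar = k ∧ ∀ t, t₀ ≤ t → t < tstar → x t < k := by
  have h1p : 0 < 1 - p := sub_pos.2 hp1
  have hc : 0 < γ * n * (1 - p) := by positivity
  have hbracket : ∀ t, γ * n * (p - 1) * (t - t₀) + A ^ (1 - p) = γ * n * (1 - p) * (tstar - t) := by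
    intro t
    rw [htstar]
    field_simp
    ring
  refine ⟨?_, fun t _ ht => ?_⟩
  · rw [hx, hbracket, sub_self, mul_zero]
    exact div_one_add_zero_rpow_rpow (one_div_ne_zero h1p.ne') k _
  · rw [hx, hbracket]
    exact div_one_add_rpow_rpow_lt_self hk (mul_pos hc (sub_pos.2 ht)) (one_div_pos.2 hn) _

/-- For 0 < p < 1, the general growth curve reaches the carrying capacity k in the finite
time t* = t₀ + Aₙ^{1−p}/(γn(1−p)), staying strictly below k before t*. -/
theorem stmt_16 (γ n k x₀ t₀ p : ℝ)
    (hγ : 0 < γ) (hn : 0 < n) (hk : 0 < k) (hx₀ : 0 < x₀) (hx₀k : x₀ < k)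
    (hp0 : 0 < p) (hp1 : p < 1)
    (A : ℝ) (hA : A = (k / x₀) ^ n - 1)
    (x : ℝ → ℝ)
    (hx : ∀ t, x t =
      k / (1 + (γ * n * (p - 1) * (t - t₀) + A ^ (1 - p)) ^ (1 / (1 - p))) ^ (1 / n))
    (tstar : ℝ) (htstar : tstar = t₀ + A ^ (1 - p) / (γ * n * (1 - p))) :
    x tstar = k ∧ ∀ t, t₀ ≤ t → t < tstar → x t < k :=
  stmt_16_general γ n k t₀ p hγ hn hk hp1 A x hx tstar htstar
end
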